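/- arXiv:1810.09026 — 4 statements merged into one kernel-verified Lean document; each statement's English description precedes it below -/
import Mathlib

section
/- Let θ : ℝ → ℝ^A be differentiable and satisfy the QPG dynamics θ̇_b(t) = π(b; θ(t)) · A(b; θ(t)) for all b ∈ A and all t. Then the induced policy trajectory satisfies the dynamical system d/dt π(a; θ(t)) = π(a; θ(t)) · (π(a; θ(t)) A(a; θ(t)) − ∑_{b∈A} π(b; θ(t))² A(b; θ(t))) for all a ∈ A and all t. -/
noncomputable def softmax {A : Type*} [Fintype A] (θ : A → ℝ) (a : A) : ℝ :=
  Real.exp (θ a) / ∑ b, Real.exp (θ b)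

/-! The QPG dynamics are a special case of the chain rule for softmax along a curve
`θ(t)`: `d/dt π(a; θ) = π(a; θ) (θ̇_a − ∑_b π(b; θ) θ̇_b)`. Substituting
`θ̇_b = π(b; θ) A(b; θ)` turns the subtracted sum into `∑_b π(b; θ)² A(b; θ)`. -/

theorem sum_softmax_mul {A : Type*} [Fintype A] (θ x : A → ℝ) :
    ∑ b, softmax θ b * x b = (∑ b, Real.exp (θ b) * x b) / ∑ b, Real.exp (θ b) := by
  simp only [softmax, div_mul_eq_mul_div, Finset.sum_div]

theorem HasDerivAt.softmax {A : Type*} [Fintype A] {θ : ℝ → A → ℝ} {θ' : A → ℝ} {t : ℝ}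
    (hθ : HasDerivAt θ θ' t) (a : A) :
    HasDerivAt (fun s => softmax (θ s) a)
      (softmax (θ t) a * (θ' a - ∑ b, softmax (θ t) b * θ' b)) t := by
  have hcoord (b : A) : HasDerivAt (fun s => θ s b) (θ' b) t := hasDerivAt_pi.mp hθ b
  have hnum := (hcoord a).exp
  have hden : HasDerivAt (fun s => ∑ b, Real.exp (θ s b)) (∑ b, Real.exp (θ t b) * θ' b) t :=
    HasDerivAt.fun_sum fun b _ => (hcoord b).exp
  have hZ : (∑ b, Real.exp (θ t b)) ≠ 0 :=
    (Finset.sum_pos (fun b _ => Real.exp_pos _) ⟨a, Finset.mem_univ a⟩).ne'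
  have hquot : HasDerivAt (fun s => _root_.softmax (θ s) a)
      ((Real.exp (θ t a) * θ' a * (∑ b, Real.exp (θ t b))
        - Real.exp (θ t a) * ∑ b, Real.exp (θ t b) * θ' b) / (∑ b, Real.exp (θ t b)) ^ 2) t :=
    hnum.div hden hZ
  convert hquot using 1
  rw [sum_softmax_mul, _root_.softmax]
  field_simp

theorem stmt5_general {A : Type*} [Fintype A]
    (q : A → ℝ) (θ : ℝ → A → ℝ) (θdot : ℝ → A → ℝ)
    (hθ : ∀ t : ℝ, HasDerivAt θ (θdot t) t)
    (hdyn : ∀ (t : ℝ) (b : A),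
      θdot t b = softmax (θ t) b * (q b - ∑ c, softmax (θ t) c * q c)) :
    ∀ (t : ℝ) (a : A),
      HasDerivAt (fun s => softmax (θ s) a)
        (softmax (θ t) a *
          (softmax (θ t) a * (q a - ∑ c, softmax (θ t) c * q c) -
            ∑ b, (softmax (θ t) b) ^ 2 * (q b - ∑ c, softmax (θ t) c * q c))) t := by
  intro t a
  have hsum : ∑ b, (softmax (θ t) b) ^ 2 * (q b - ∑ c, softmax (θ t) c * q c)
      = ∑ b, softmax (θ t) b * θdot t b :=
    Finset.sum_congr rfl fun b _ => by rw [hdyn t b]; ring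
  rw [hsum, ← hdyn t a]
  exact (hθ t).softmax a

/-- if `θ : ℝ → ℝ^A` is differentiable and follows the QPG dynamics
`θ̇_b(t) = π(b; θ(t)) A(b; θ(t))` (with `A(b; θ) = q b − ∑_c π(c; θ) q c`), then the
induced policy trajectory satisfies
`d/dt π(a; θ(t)) = π(a; θ(t)) (π(a; θ(t)) A(a; θ(t)) − ∑_b π(b; θ(t))² A(b; θ(t)))`. -/
theorem stmt5 {A : Type*} [Fintype A] [Nonempty A]
    (q : A → ℝ) (θ : ℝ → A → ℝ) (θdot : ℝ → A → ℝ)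
    (hθ : ∀ t : ℝ, HasDerivAt θ (θdot t) t)
    (hdyn : ∀ (t : ℝ) (b : A),
      θdot t b = softmax (θ t) b * (q b - ∑ c, softmax (θ t) c * q c)) :
    ∀ (t : ℝ) (a : A),
      HasDerivAt (fun s => softmax (θ s) a)
        (softmax (θ t) a *
          (softmax (θ t) a * (q a - ∑ c, softmax (θ t) c * q c) -
            ∑ b, (softmax (θ t) b) ^ 2 * (q b - ∑ c, softmax (θ t) c * q c))) t :=
  stmt5_general q θ θdot hθ hdyn
end

section
/- Let π be a differentiable parameterized policy, θ₀ ∈ ℝ^d, and suppose the advantage A(a; θ₀) = q(a) − V(θ₀) is nonzero for every a ∈ A. Then the function h(θ) = ∑_{a∈A} max(0, q(a) − V(θ)) is differentiable at θ₀ with gradient ∇h(θ₀) = −n₊ · ∇V(θ₀), where n₊ = |{a ∈ A : A(a; θ₀) > 0}|. In particular, the RPG gradient −∇h(θ₀) equals n₊ times the QPG gradient ∇V(θ₀), so the RPG gradient is proportional to the QPG gradient. -/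
/-- let `π : ℝ^d → (A → ℝ)` be a differentiable parameterized policy
(simplex sum constraint `∑_a π(θ)(a) = 1`), with `V(θ) = ∑_b π(θ)(b) q(b)`, and
suppose every advantage `q(a) − V(θ₀)` is nonzero. Then
`h(θ) = ∑_a max(0, q(a) − V(θ))` is differentiable at `θ₀` with
`∇h(θ₀) = −n₊ ∇V(θ₀)`, where `n₊ = |{a : q(a) − V(θ₀) > 0}|`; hence the RPG
gradient `−∇h(θ₀)` equals `n₊` times the QPG gradient `∇V(θ₀)`. -/
theorem stmt6 {A : Type*} [Fintype A] [Nonempty A] {d : ℕ}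
    (π : (Fin d → ℝ) → A → ℝ) (q : A → ℝ) (θ₀ : Fin d → ℝ)
    (V : (Fin d → ℝ) → ℝ) (hV : ∀ θ, V θ = ∑ b, π θ b * q b)
    (h : (Fin d → ℝ) → ℝ) (hh : ∀ θ, h θ = ∑ a, max 0 (q a - V θ))
    (hdiff : ∀ a : A, DifferentiableAt ℝ (fun θ => π θ a) θ₀)
    (hsimplex : ∀ θ : Fin d → ℝ, ∑ a, π θ a = 1)
    (hadv : ∀ a : A, q a - V θ₀ ≠ 0)
    (n : ℕ) (hn : n = Nat.card {a : A // 0 < q a - V θ₀}) :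
    DifferentiableAt ℝ h θ₀ ∧
    fderiv ℝ h θ₀ = -((n : ℝ) • fderiv ℝ V θ₀) := by
  classical
  -- V is differentiable at θ₀
  have hVdiff : DifferentiableAt ℝ V θ₀ := by
    have : DifferentiableAt ℝ (fun θ => ∑ b, π θ b * q b) θ₀ :=
      DifferentiableAt.fun_sum fun b _ => (hdiff b).mul_const (q b)
    exact this.congr_of_eventuallyEq (Filter.Eventually.of_forall fun θ => (hV θ))
  set S : Finset A := Finset.univ.filter (fun a => 0 < q a - V θ₀) with hS
  set g : (Fin d → ℝ) → ℝ := fun θ => (∑ a ∈ S, q a) - (S.card : ℝ) * V θ with hg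
  -- eventual equality of h and g
  have hev : h =ᶠ[nhds θ₀] g := by
    have hsign : ∀ᶠ θ in nhds θ₀, ∀ a : A,
        (0 < q a - V θ₀ → 0 < q a - V θ) ∧ (q a - V θ₀ < 0 → q a - V θ < 0) := by
      rw [Filter.eventually_all]
      intro a
      have hc : ContinuousAt (fun θ => q a - V θ) θ₀ :=
        continuousAt_const.sub hVdiff.continuousAt
      rcases lt_or_gt_of_ne (hadv a) with hneg | hpos
      · have := hc.eventually_lt continuousAt_const hneg
        filter_upwards [this] with θ hθ
        exact ⟨fun hp => absurd hneg (not_lt.2 hp.le), fun _ => hθ⟩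
      · have := continuousAt_const.eventually_lt hc hpos
        filter_upwards [this] with θ hθ
        exact ⟨fun _ => hθ, fun hneg' => absurd hpos (not_lt.2 hneg'.le)⟩
    filter_upwards [hsign] with θ hθ
    rw [hh θ, hg]
    have h1 : ∑ a, max 0 (q a - V θ)
        = ∑ a ∈ S, max 0 (q a - V θ) + ∑ a ∈ Finset.univ.filter (fun a => ¬ (0 < q a - V θ₀)), max 0 (q a - V θ) := by
      rw [hS]
      exact (Finset.sum_filter_add_sum_filter_not _ _ _).symm
    rw [h1]
    have h2 : ∑ a ∈ S, max 0 (q a - V θ) = ∑ a ∈ S, (q a - V θ) := by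
      apply Finset.sum_congr rfl
      intro a ha
      rw [hS, Finset.mem_filter] at ha
      exact max_eq_right ((hθ a).1 ha.2).le
    have h3 : ∑ a ∈ Finset.univ.filter (fun a => ¬ (0 < q a - V θ₀)), max 0 (q a - V θ) = 0 := by
      apply Finset.sum_eq_zero
      intro a ha
      rw [Finset.mem_filter] at ha
      have hne : q a - V θ₀ < 0 := (hadv a).lt_of_le (not_lt.1 ha.2)
      exact max_eq_left ((hθ a).2 hne).le
    rw [h2, h3, add_zero, Finset.sum_sub_distrib, Finset.sum_const, nsmul_eq_mul]
  have hgdiff : DifferentiableAt ℝ g θ₀ :=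
    (differentiableAt_const _).sub (hVdiff.const_mul _)
  have hdh : DifferentiableAt ℝ h θ₀ := hgdiff.congr_of_eventuallyEq hev
  refine ⟨hdh, ?_⟩
  have hfg : fderiv ℝ h θ₀ = fderiv ℝ g θ₀ := hev.fderiv_eq
  have hcard : (n : ℝ) = (S.card : ℝ) := by
    rw [hn, Nat.card_eq_fintype_card, Fintype.card_subtype]
  rw [hfg, hg, hcard]
  rw [fderiv_const_sub, fderiv_const_mul hVdiff]
end

section
/- Let π be a differentiable parameterized policy, θ₀ ∈ ℝ^d, suppose A has exactly two actions, π(θ₀)(a) > 0 for both actions, and the advantage A(a; θ₀) = q(a) − V(θ₀) is nonzero for both actions. Then exactly one action has strictly positive advantage and the other strictly negative advantage (so n₊ = 1), and consequently the RPG gradient equals the QPG gradient: −∇h(θ₀) = ∇V(θ₀), where h(θ) = ∑_{a∈A} max(0, q(a) − V(θ)). -/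
set_option maxHeartbeats 1000000


/-- let `π : ℝ^d → (A → ℝ)` be a differentiable parameterized policy
(simplex sum constraint), `|A| = 2`, `π(θ₀)(a) > 0` for both actions, and both
advantages `q(a) − V(θ₀)` nonzero. Then exactly one action has strictly positive
advantage and the other strictly negative advantage (so `n₊ = 1`), and consequently
the RPG gradient equals the QPG gradient: `−∇h(θ₀) = ∇V(θ₀)`, where
`h(θ) = ∑_a max(0, q(a) − V(θ))`. -/
theorem stmt7 {A : Type*} [Fintype A] {d : ℕ}
    (hcard : Fintype.card A = 2)
    (π : (Fin d → ℝ) → A → ℝ) (q : A → ℝ) (θ₀ : Fin d → ℝ)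
    (V : (Fin d → ℝ) → ℝ) (hV : ∀ θ, V θ = ∑ b, π θ b * q b)
    (h : (Fin d → ℝ) → ℝ) (hh : ∀ θ, h θ = ∑ a, max 0 (q a - V θ))
    (hdiff : ∀ a : A, DifferentiableAt ℝ (fun θ => π θ a) θ₀)
    (hsimplex : ∀ θ : Fin d → ℝ, ∑ a, π θ a = 1)
    (hpos : ∀ a : A, 0 < π θ₀ a)
    (hadv : ∀ a : A, q a - V θ₀ ≠ 0) :
    ((∃! a : A, 0 < q a - V θ₀) ∧ (∃! a : A, q a - V θ₀ < 0)) ∧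
    -fderiv ℝ h θ₀ = fderiv ℝ V θ₀ := by
  -- get the two actions
  have : DecidableEq A := Classical.decEq A
  rw [Fintype.card, Finset.card_eq_two] at hcard
  obtain ⟨x, y, hxy, huniv⟩ := hcard
  have hmemxy : ∀ z : A, z = x ∨ z = y := by
    intro z
    have hz := Finset.mem_univ z
    rw [huniv] at hz
    simpa using hz
  have hsum : ∀ f : A → ℝ, ∑ a, f a = f x + f y := by
    intro f; rw [huniv, Finset.sum_pair hxy]
  -- WLOG q x ≠ q y, and pick the bigger one
  have hne : q x ≠ q y := by
    intro hqe
    have h1 := hsum (fun a => π θ₀ a)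
    have h2 := hV θ₀
    rw [hsum] at h2
    rw [hsimplex] at h1
    exact hadv x (by rw [h2, hqe]; linear_combination (q y) * h1)
  -- key computation for ordered pair (a, b) with q b < q a
  have key : ∀ a b : A, a ≠ b → q b < q a →
      (0 < q a - V θ₀ ∧ q b - V θ₀ < 0) := by
    intro a b hab hlt
    have hs : ∀ f : A → ℝ, ∑ c, f c = f a + f b := by
      intro f
      rcases hmemxy a with rfl | rfl <;> rcases hmemxy b with rfl | rfl <;>
        simp_all [Finset.sum_pair hxy] <;> ring
    have h1 : π θ₀ a + π θ₀ b = 1 := by rw [← hs]; exact hsimplex θ₀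
    have h2 : V θ₀ = π θ₀ a * q a + π θ₀ b * q b := by rw [hV θ₀, hs]
    have hpa := hpos a; have hpb := hpos b
    have e1 : q a - V θ₀ = π θ₀ b * (q a - q b) := by
      rw [h2]; linear_combination (-(q a)) * h1
    have e2 : q b - V θ₀ = π θ₀ a * (q b - q a) := by
      rw [h2]; linear_combination (-(q b)) * h1
    exact ⟨e1 ▸ mul_pos hpb (by linarith),
      e2 ▸ mul_neg_of_pos_of_neg hpa (by linarith)⟩
  -- decide which action has bigger q
  obtain ⟨a, b, hab, hqlt⟩ : ∃ a b : A, a ≠ b ∧ q b < q a := by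
    rcases lt_or_gt_of_ne hne with h' | h'
    · exact ⟨y, x, hxy.symm, h'⟩
    · exact ⟨x, y, hxy, h'⟩
  obtain ⟨hA, hB⟩ := key a b hab hqlt
  have hmem : ∀ z : A, z = a ∨ z = b := by
    intro z
    rcases hmemxy z with rfl | rfl <;> rcases hmemxy a with rfl | rfl <;>
      rcases hmemxy b with rfl | rfl <;> simp_all
  -- differentiability and continuity of V
  have hVfun : V = fun θ => ∑ c, π θ c * q c := funext hV
  have hVdiff : DifferentiableAt ℝ V θ₀ := by
    rw [hVfun]
    exact DifferentiableAt.fun_sum (fun c _ => (hdiff c).mul_const (q c))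
  have hVc : ContinuousAt V θ₀ := hVdiff.continuousAt
  -- locally, h θ = q a - V θ
  have hev : h =ᶠ[nhds θ₀] fun θ => q a - V θ := by
    have e1 : ∀ᶠ θ in nhds θ₀, V θ < q a :=
      hVc.eventually_lt continuousAt_const (by linarith)
    have e2 : ∀ᶠ θ in nhds θ₀, q b < V θ :=
      continuousAt_const.eventually_lt hVc (by linarith)
    filter_upwards [e1, e2] with θ h1 h2
    have hs : ∀ f : A → ℝ, ∑ c, f c = f a + f b := by
      intro f
      rcases hmemxy a with rfl | rfl <;> rcases hmemxy b with rfl | rfl <;>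
        simp_all [Finset.sum_pair hxy] <;> ring
    rw [hh θ, hs]
    rw [max_eq_right (by linarith), max_eq_left (by linarith)]
    ring
  have hfd : fderiv ℝ h θ₀ = fderiv ℝ (fun θ => q a - V θ) θ₀ := hev.fderiv_eq
  refine ⟨⟨⟨a, hA, ?_⟩, ⟨b, hB, ?_⟩⟩, ?_⟩
  · intro z hz
    rcases hmem z with rfl | rfl
    · rfl
    · linarith
  · intro z hz
    rcases hmem z with rfl | rfl
    · linarith
    · rfl
  · have hfd2 : fderiv ℝ (fun θ => q a - V θ) θ₀ = -fderiv ℝ V θ₀ :=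
      fderiv_const_sub (q a)
    rw [hfd, hfd2, neg_neg]
end

section
/- Under the information-state model with per-action weights, for every action a ∈ 𝒜 the advantage equals the immediate counterfactual regret scaled by 1/B: q(a) − ∑_{b∈𝒜} π(b) q(b) = (v^c(a) − ∑_{b∈𝒜} π(b) v^c(b)) / B. -/
/-- under the information-state model with per-action weights
`c_a : T → ℝ`, q-values `q(a) = ∑_t (η(h t) / ∑_{h'} η(h')) c_a(t)` and
counterfactual values `v^c(a) = ∑_t η_{−i}(h t) c_a(t)`, for every action `a` the
advantage equals the immediate counterfactual regret scaled by `1/B`: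
`q(a) − ∑_b π(b) q(b) = (v^c(a) − ∑_b π(b) v^c(b)) / B`, where `B = ∑_h η_{−i}(h)`. -/
theorem stmt10 {H : Type*} [Fintype H] [Nonempty H] {T : Type*} [Fintype T]
    {Act : Type*} [Fintype Act] [Nonempty Act]
    (h : T → H) (ηi ηmi : H → ℝ) (c : Act → T → ℝ) (e : ℝ)
    (π : Act → ℝ) (q vc : Act → ℝ) (B : ℝ)
    (hη_nonneg : ∀ x : H, 0 ≤ ηmi x)
    (he : 0 < e) (hηi : ∀ x : H, ηi x = e)
    (hBdef : B = ∑ x : H, ηmi x) (hB : 0 < B)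
    (hπ_nonneg : ∀ a : Act, 0 ≤ π a) (hπ_sum : ∑ a : Act, π a = 1)
    (hq : ∀ a : Act,
      q a = ∑ t : T, (ηi (h t) * ηmi (h t) / ∑ x : H, ηi x * ηmi x) * c a t)
    (hvc : ∀ a : Act, vc a = ∑ t : T, ηmi (h t) * c a t) :
    ∀ a : Act, q a - ∑ b, π b * q b = (vc a - ∑ b, π b * vc b) / B := by
  have hsum : (∑ x : H, ηi x * ηmi x) = e * B := by
    rw [hBdef, Finset.mul_sum]
    exact Finset.sum_congr rfl fun x _ => by rw [hηi]
  have hkey : ∀ a : Act, q a = vc a / B := by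
    intro a
    rw [hq a, hvc a, Finset.sum_div]
    refine Finset.sum_congr rfl fun t _ => ?_
    rw [hηi, hsum]
    field_simp
  intro a
  have : (∑ b, π b * q b) = (∑ b, π b * vc b) / B := by
    rw [Finset.sum_div]
    exact Finset.sum_congr rfl fun b _ => by rw [hkey b, mul_div_assoc]
  rw [hkey a, this, sub_div]
end
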